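/- Let φ : 𝔻 → 𝔻 be holomorphic and ψ(z) = (z+b)/(1+bz) with b ∈ (0,1). Set I = ∫₀¹ (1 - D_h φ(r)) λ(r) dr and S = Σ_{n≥0} (1 - D_h φ(ψ^{∘n}(0))). Then 2b/(1+b)² ≤ I/S ≤ 2b/(1-b)² (interpreted as 2b/(1+b)² · S ≤ I ≤ 2b/(1-b)² · S). -/

import Mathlib

/-!
The two bounds come from a Harnack inequality for `1 - Dh φ`: if `p` is the pseudo-hyperbolic
distance between `z` and `w`, then `((1 - p) / (1 + p)) ^ 2 * (1 - Dh φ w) ≤ 1 - Dh φ z`.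
It follows from the Schwarz–Pick lemma for the slope at `0` of `φ` conjugated by the disc
automorphisms moving `w` and `φ w` to `0`: the modulus of that slope is `Dh φ w` at `0` and the
hyperbolic difference quotient of `φ` at `(w, z)` at the point corresponding to `z`, so the
quotient is within pseudo-hyperbolic distance `p` of both `Dh φ w` and `Dh φ z`.

On the real axis `(1 - p) / (1 + p)` is the ratio of the values of `r ↦ (1 - r) / (1 + r)`,
a coordinate in which `ψ` is multiplication by `(1 - b) / (1 + b)`. On each interval between
consecutive points of the orbit, the integrand is thus squeezed between explicit multiples of
`1 - Dh φ (ψ^[n] 0)` whose integrals are `2b/(1+b)²` and `2b/(1-b)²` times it; summing over `n`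
gives the theorem.
-/

open Metric Set MeasureTheory

noncomputable def Dh (φ : ℂ → ℂ) (z : ℂ) : ℝ :=
  (1 - ‖z‖ ^ 2) * ‖deriv φ z‖ / (1 - ‖φ z‖ ^ 2)

open Complex ComplexConjugate

open scoped ENNReal

noncomputable def mobius (a z : ℂ) : ℂ := (a - z) / (1 - conj a * z)

theorem norm_sq_one_sub_conj_mul (a z : ℂ) :
    ‖1 - conj a * z‖ ^ 2 = (1 - ‖a‖ ^ 2) * (1 - ‖z‖ ^ 2) + ‖a - z‖ ^ 2 := by
  simp only [Complex.sq_norm, normSq_apply, sub_re, sub_im, mul_re, mul_im, conj_re, conj_im,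
    one_re, one_im]
  ring

theorem one_sub_conj_mul_ne_zero {a z : ℂ} (ha : ‖a‖ < 1) (hz : ‖z‖ ≤ 1) :
    1 - conj a * z ≠ 0 := by
  refine sub_ne_zero.2 fun h => ?_
  have : ‖conj a * z‖ < 1 := by
    rw [norm_mul, norm_conj]
    nlinarith [norm_nonneg a, norm_nonneg z]
  rw [← h, norm_one] at this
  exact this.false

theorem norm_mobius_lt_one {a z : ℂ} (ha : ‖a‖ < 1) (hz : ‖z‖ < 1) : ‖mobius a z‖ < 1 := by
  have hd := norm_pos_iff.2 (one_sub_conj_mul_ne_zero ha hz.le)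
  rw [mobius, norm_div, div_lt_one hd]
  refine lt_of_pow_lt_pow_left₀ 2 hd.le ?_
  rw [norm_sq_one_sub_conj_mul]
  have : 0 < (1 - ‖a‖ ^ 2) * (1 - ‖z‖ ^ 2) := by
    apply mul_pos <;> nlinarith [norm_nonneg a, norm_nonneg z]
  linarith

theorem mobius_zero (a : ℂ) : mobius a 0 = a := by simp [mobius]

theorem mobius_self (a : ℂ) : mobius a a = 0 := by simp [mobius]

theorem mobius_mobius {a z : ℂ} (ha : ‖a‖ < 1) (hz : ‖z‖ < 1) : mobius a (mobius a z) = z := by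
  have hd := one_sub_conj_mul_ne_zero ha hz.le
  have hd' : 1 - conj a * a ≠ 0 := one_sub_conj_mul_ne_zero ha ha.le
  have hnum : a - (a - z) / (1 - conj a * z) = z * (1 - conj a * a) / (1 - conj a * z) := by
    rw [eq_div_iff hd, sub_mul, div_mul_cancel₀ _ hd]; ring
  have hden : 1 - conj a * ((a - z) / (1 - conj a * z)) = (1 - conj a * a) / (1 - conj a * z) := by
    rw [eq_div_iff hd, sub_mul, mul_div_assoc', div_mul_cancel₀ _ hd]; ring
  rw [mobius, mobius, hnum, hden, div_div_div_cancel_right₀ hd, mul_div_assoc, div_self hd',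
    mul_one]

theorem norm_mobius_comm (a z : ℂ) : ‖mobius a z‖ = ‖mobius z a‖ := by
  rw [mobius, mobius, norm_div, norm_div, norm_sub_rev a z, ← norm_conj (1 - conj a * z)]
  congr 2
  rw [map_sub, map_one, map_mul, conj_conj, mul_comm]

theorem hasDerivAt_mobius (a : ℂ) {z : ℂ} (h : 1 - conj a * z ≠ 0) :
    HasDerivAt (mobius a) ((conj a * a - 1) / (1 - conj a * z) ^ 2) z := by
  have := ((hasDerivAt_id z).const_sub a).div (((hasDerivAt_id z).const_mul (conj a)).const_sub 1) h
  exact this.congr_deriv (by simp only [id]; ring)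

theorem differentiableOn_mobius {a : ℂ} (ha : ‖a‖ < 1) :
    DifferentiableOn ℂ (mobius a) (ball 0 1) := fun _z hz =>
  (hasDerivAt_mobius a (one_sub_conj_mul_ne_zero ha (mem_ball_zero_iff.1 hz).le))
    |>.differentiableAt.differentiableWithinAt

theorem mapsTo_mobius {a : ℂ} (ha : ‖a‖ < 1) : MapsTo (mobius a) (ball 0 1) (ball 0 1) :=
  fun _z hz => mem_ball_zero_iff.2 (norm_mobius_lt_one ha (mem_ball_zero_iff.1 hz))

section SchwarzPick

variable {g : ℂ → ℂ}

theorem norm_mobius_apply_le_norm (hd : DifferentiableOn ℂ g (ball 0 1))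
    (hm : MapsTo g (ball 0 1) (ball 0 1)) {ζ : ℂ} (hζ : ‖ζ‖ < 1) :
    ‖mobius (g 0) (g ζ)‖ ≤ ‖ζ‖ := by
  have hg0 : ‖g 0‖ < 1 := mem_ball_zero_iff.1 (hm (mem_ball_self one_pos))
  exact Complex.norm_le_norm_of_mapsTo_ball ((differentiableOn_mobius hg0).comp hd hm)
    (((mapsTo_mobius hg0).comp hm).mono_right ball_subset_closedBall)
    (mobius_self (g 0)) hζ

theorem norm_sub_le_mul_norm_one_sub_conj_mul (hd : DifferentiableOn ℂ g (ball 0 1))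
    (hm : MapsTo g (ball 0 1) (closedBall 0 1)) {ζ : ℂ} (hζ : ‖ζ‖ < 1) :
    ‖g ζ - g 0‖ ≤ ‖ζ‖ * ‖1 - conj (g 0) * g ζ‖ := by
  by_cases hopen : MapsTo g (ball 0 1) (ball 0 1)
  · have h0 := mem_ball_zero_iff.1 (hopen (mem_ball_self one_pos))
    have hζ' := mem_ball_zero_iff.1 (hopen (mem_ball_zero_iff.2 hζ))
    have hpick := norm_mobius_apply_le_norm hd hopen hζ
    rwa [mobius, norm_div, norm_sub_rev,
      div_le_iff₀ (norm_pos_iff.2 (one_sub_conj_mul_ne_zero h0 hζ'.le))] at hpick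
  · obtain ⟨ζ₀, hζ₀, hζ₀1⟩ : ∃ ζ₀ ∈ ball (0 : ℂ) 1, 1 ≤ ‖g ζ₀‖ := by
      simpa [MapsTo] using hopen
    have hmax : IsMaxOn (norm ∘ g) (ball 0 1) ζ₀ := fun u hu =>
      (mem_closedBall_zero_iff.1 (hm hu)).trans hζ₀1
    have hconst := Complex.eqOn_of_isPreconnected_of_isMaxOn_norm
      (convex_ball 0 1).isPreconnected isOpen_ball hd hζ₀ hmax
    simp only [hconst (mem_ball_zero_iff.2 hζ), hconst (mem_ball_self one_pos),
      Function.const_apply, sub_self, norm_zero]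
    positivity

end SchwarzPick

theorem abs_norm_sub_norm_le_mul {x y : ℂ} {t : ℝ} (hx : ‖x‖ ≤ 1) (hy : ‖y‖ ≤ 1)
    (ht0 : 0 ≤ t) (ht1 : t ≤ 1) (h : ‖x - y‖ ≤ t * ‖1 - conj y * x‖) :
    |‖x‖ - ‖y‖| ≤ t * (1 - ‖x‖ * ‖y‖) := by
  set d := ‖x - y‖
  set s := ‖1 - conj y * x‖
  have hid : s ^ 2 = (1 - ‖x‖ ^ 2) * (1 - ‖y‖ ^ 2) + d ^ 2 := by
    rw [norm_sq_one_sub_conj_mul, norm_sub_rev]; ring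
  have hdiff : |‖x‖ - ‖y‖| ≤ d := abs_norm_sub_norm_le x y
  have hs : 1 - ‖x‖ * ‖y‖ ≤ s := by
    have := norm_sub_norm_le (1 : ℂ) (conj y * x)
    rw [norm_one, norm_mul, norm_conj] at this
    linarith
  have hx0 := norm_nonneg x
  have hy0 := norm_nonneg y
  have hd0 : 0 ≤ d := norm_nonneg _
  have hxy : 0 ≤ 1 - ‖x‖ * ‖y‖ := by nlinarith
  -- `(1 - ‖x‖ * ‖y‖) ^ 2 - (‖x‖ - ‖y‖) ^ 2 = (1 - ‖x‖ ^ 2) * (1 - ‖y‖ ^ 2)`, so it suffices to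
  -- bound the right side below by `(1 - t ^ 2) * (1 - ‖x‖ * ‖y‖) ^ 2`.
  have h1 : (1 - ‖x‖ ^ 2) * (1 - ‖y‖ ^ 2) ≥ s ^ 2 * (1 - t ^ 2) := by nlinarith
  have h2 : (1 - ‖x‖ ^ 2) * (1 - ‖y‖ ^ 2) ≥ (1 - ‖x‖ * ‖y‖) ^ 2 * (1 - t ^ 2) := by
    nlinarith [mul_nonneg (by nlinarith : (0:ℝ) ≤ s ^ 2 - (1 - ‖x‖ * ‖y‖) ^ 2)
      (by nlinarith : (0:ℝ) ≤ 1 - t ^ 2)]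
  have h3 : (‖x‖ - ‖y‖) ^ 2 ≤ (t * (1 - ‖x‖ * ‖y‖)) ^ 2 := by nlinarith
  exact abs_le_of_sq_le_sq h3 (mul_nonneg ht0 hxy)

noncomputable def recenter (f : ℂ → ℂ) (w : ℂ) : ℂ → ℂ := mobius (f w) ∘ f ∘ mobius w

-- The hyperbolic difference quotient of Beardon and Minda; it is `0` at `z = w`.
noncomputable def hypDiffQuot (f : ℂ → ℂ) (w z : ℂ) : ℝ := ‖mobius (f w) (f z)‖ / ‖mobius w z‖

section Recenter

variable {f : ℂ → ℂ} {w z : ℂ}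

theorem differentiableOn_recenter (hd : DifferentiableOn ℂ f (ball 0 1))
    (hm : MapsTo f (ball 0 1) (ball 0 1)) (hw : ‖w‖ < 1) :
    DifferentiableOn ℂ (recenter f w) (ball 0 1) :=
  ((differentiableOn_mobius (mem_ball_zero_iff.1 (hm (mem_ball_zero_iff.2 hw)))).comp hd hm).comp
    (differentiableOn_mobius hw) (mapsTo_mobius hw)

theorem mapsTo_recenter (hm : MapsTo f (ball 0 1) (ball 0 1)) (hw : ‖w‖ < 1) :
    MapsTo (recenter f w) (ball 0 1) (ball 0 1) :=
  ((mapsTo_mobius (mem_ball_zero_iff.1 (hm (mem_ball_zero_iff.2 hw)))).comp hm).comp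
    (mapsTo_mobius hw)

theorem recenter_zero : recenter f w 0 = 0 := by
  simp [recenter, mobius_zero, mobius_self]

theorem recenter_mobius (hw : ‖w‖ < 1) (hz : ‖z‖ < 1) :
    recenter f w (mobius w z) = mobius (f w) (f z) := by
  simp [recenter, mobius_mobius hw hz]

theorem norm_deriv_recenter_zero (hd : DifferentiableOn ℂ f (ball 0 1))
    (hm : MapsTo f (ball 0 1) (ball 0 1)) (hw : ‖w‖ < 1) :
    ‖deriv (recenter f w) 0‖ = Dh f w := by
  have hc : ‖f w‖ < 1 := mem_ball_zero_iff.1 (hm (mem_ball_zero_iff.2 hw))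
  have hinner : HasDerivAt (f ∘ mobius w)
      (deriv f w * ((conj w * w - 1) / (1 - conj w * 0) ^ 2)) 0 := by
    refine HasDerivAt.comp 0 ?_ (hasDerivAt_mobius w (by simp))
    rw [mobius_zero]
    exact (hd.differentiableAt (isOpen_ball.mem_nhds (mem_ball_zero_iff.2 hw))).hasDerivAt
  have hF := (hasDerivAt_mobius (f w) (one_sub_conj_mul_ne_zero hc hc.le)).comp_of_eq 0 hinner
    (by simp [mobius_zero])
  have hw2 : 0 ≤ 1 - ‖w‖ ^ 2 := by nlinarith [norm_nonneg w]
  have hc2 : 0 < 1 - ‖f w‖ ^ 2 := by nlinarith [norm_nonneg (f w)]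
  have hc2' : (1 : ℂ) - (‖f w‖ : ℂ) ^ 2 ≠ 0 := by exact_mod_cast hc2.ne'
  have hval : (conj (f w) * f w - 1) / (1 - conj (f w) * f w) ^ 2
      * (deriv f w * ((conj w * w - 1) / (1 - conj w * 0) ^ 2))
      = (((1 - ‖w‖ ^ 2) / (1 - ‖f w‖ ^ 2) : ℝ) : ℂ) * deriv f w := by
    rw [conj_mul', conj_mul']
    push_cast
    field_simp
    ring
  rw [recenter, hF.deriv, hval, norm_mul, norm_real, Real.norm_of_nonneg (div_nonneg hw2 hc2.le),
    Dh, div_mul_eq_mul_div]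

theorem norm_dslope_recenter_le_one (hd : DifferentiableOn ℂ f (ball 0 1))
    (hm : MapsTo f (ball 0 1) (ball 0 1)) (hw : ‖w‖ < 1) (hz : ‖z‖ < 1) :
    ‖dslope (recenter f w) 0 z‖ ≤ 1 := by
  have hmaps : MapsTo (recenter f w) (ball 0 1) (closedBall (recenter f w 0) 1) := by
    rw [recenter_zero]; exact (mapsTo_recenter hm hw).mono_right ball_subset_closedBall
  simpa using Complex.norm_dslope_le_div_of_mapsTo_ball (differentiableOn_recenter hd hm hw)
    hmaps (mem_ball_zero_iff.2 hz)

theorem norm_dslope_recenter_mobius (hw : ‖w‖ < 1) (hz : ‖z‖ < 1) (hzw : z ≠ w) :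
    ‖dslope (recenter f w) 0 (mobius w z)‖ = hypDiffQuot f w z := by
  have hζ : mobius w z ≠ 0 := fun h => hzw (by rw [← mobius_mobius hw hz, h, mobius_zero])
  rw [dslope_of_ne _ hζ, slope_def_field, recenter_zero, sub_zero, sub_zero,
    recenter_mobius hw hz, norm_div, hypDiffQuot]

theorem Dh_le_one (hd : DifferentiableOn ℂ f (ball 0 1))
    (hm : MapsTo f (ball 0 1) (ball 0 1)) (hw : ‖w‖ < 1) : Dh f w ≤ 1 := by
  rw [← norm_deriv_recenter_zero hd hm hw, ← dslope_same]
  exact norm_dslope_recenter_le_one hd hm hw (by simp)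

theorem Dh_nonneg (hm : MapsTo f (ball 0 1) (ball 0 1)) (hw : ‖w‖ < 1) : 0 ≤ Dh f w := by
  have hc : ‖f w‖ < 1 := mem_ball_zero_iff.1 (hm (mem_ball_zero_iff.2 hw))
  have : 0 ≤ 1 - ‖w‖ ^ 2 := by nlinarith [norm_nonneg w]
  have : 0 < 1 - ‖f w‖ ^ 2 := by nlinarith [norm_nonneg (f w)]
  rw [Dh]
  positivity

end Recenter

section HypDiffQuot

variable {f : ℂ → ℂ} {w z : ℂ}

theorem hypDiffQuot_comm (f : ℂ → ℂ) (w z : ℂ) : hypDiffQuot f w z = hypDiffQuot f z w := by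
  rw [hypDiffQuot, hypDiffQuot, norm_mobius_comm, norm_mobius_comm w]

theorem hypDiffQuot_nonneg (f : ℂ → ℂ) (w z : ℂ) : 0 ≤ hypDiffQuot f w z := by
  rw [hypDiffQuot]; positivity

theorem hypDiffQuot_le_one (hd : DifferentiableOn ℂ f (ball 0 1))
    (hm : MapsTo f (ball 0 1) (ball 0 1)) (hw : ‖w‖ < 1) (hz : ‖z‖ < 1) :
    hypDiffQuot f w z ≤ 1 := by
  rcases eq_or_ne z w with rfl | hzw
  · simp [hypDiffQuot, mobius_self]
  · rw [← norm_dslope_recenter_mobius hw hz hzw]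
    exact norm_dslope_recenter_le_one hd hm hw (norm_mobius_lt_one hw hz)

theorem abs_hypDiffQuot_sub_Dh_le (hd : DifferentiableOn ℂ f (ball 0 1))
    (hm : MapsTo f (ball 0 1) (ball 0 1)) (hw : ‖w‖ < 1) (hz : ‖z‖ < 1) (hzw : z ≠ w) :
    |hypDiffQuot f w z - Dh f w| ≤ ‖mobius w z‖ * (1 - hypDiffQuot f w z * Dh f w) := by
  have hg0 : ‖dslope (recenter f w) 0 0‖ = Dh f w := by
    rw [dslope_same, norm_deriv_recenter_zero hd hm hw]
  set g := dslope (recenter f w) 0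
  have hgd : DifferentiableOn ℂ g (ball 0 1) :=
    (differentiableOn_dslope (isOpen_ball.mem_nhds (mem_ball_self one_pos))).2
      (differentiableOn_recenter hd hm hw)
  have hg1 : ∀ u ∈ ball (0 : ℂ) 1, ‖g u‖ ≤ 1 := fun u hu =>
    norm_dslope_recenter_le_one hd hm hw (mem_ball_zero_iff.1 hu)
  have hζ := norm_mobius_lt_one hw hz
  have key := abs_norm_sub_norm_le_mul (hg1 _ (mem_ball_zero_iff.2 hζ))
    (hg1 0 (mem_ball_self one_pos)) (norm_nonneg _) hζ.le
    (norm_sub_le_mul_norm_one_sub_conj_mul hgd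
      (fun u hu => mem_closedBall_zero_iff.2 (hg1 u hu)) hζ)
  rwa [norm_dslope_recenter_mobius hw hz hzw, hg0] at key

theorem harnack_one_sub_Dh (hd : DifferentiableOn ℂ f (ball 0 1))
    (hm : MapsTo f (ball 0 1) (ball 0 1)) (hw : ‖w‖ < 1) (hz : ‖z‖ < 1) :
    ((1 - ‖mobius w z‖) / (1 + ‖mobius w z‖)) ^ 2 * (1 - Dh f w) ≤ 1 - Dh f z := by
  rcases eq_or_ne z w with rfl | hzw
  · simp [mobius_self]
  have hS1 := abs_hypDiffQuot_sub_Dh_le hd hm hw hz hzw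
  have hS2 := abs_hypDiffQuot_sub_Dh_le hd hm hz hw hzw.symm
  rw [← hypDiffQuot_comm, ← norm_mobius_comm] at hS2
  have hX1 := hypDiffQuot_le_one hd hm hw hz
  have hX0 := hypDiffQuot_nonneg f w z
  have hp1 := norm_mobius_lt_one hw hz
  set p := ‖mobius w z‖
  set X := hypDiffQuot f w z
  have hp0 : 0 ≤ p := norm_nonneg _
  have hDw0 := Dh_nonneg hm hw
  have hDw1 := Dh_le_one hd hm hw
  have hDz0 := Dh_nonneg hm hz
  have hDz1 := Dh_le_one hd hm hz
  -- `X ≤ (Dh f w + p) / (1 + p * Dh f w)` and `Dh f z ≤ (X + p) / (1 + p * X)`: each step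
  -- shrinks the distance to `1` by at most the factor `(1 - p) / (1 + p)`.
  have hA : X * (1 + p * Dh f w) ≤ Dh f w + p := by nlinarith [(abs_le.1 hS1).2]
  have hB : Dh f z * (1 + p * X) ≤ X + p := by nlinarith [(abs_le.1 hS2).1]
  have h1 : (1 - p) * (1 - Dh f w) ≤ (1 - X) * (1 + p) := by
    nlinarith [mul_nonneg (by linarith : (0:ℝ) ≤ 1 - X) (by nlinarith : (0:ℝ) ≤ p - p * Dh f w)]
  have h2 : (1 - p) * (1 - X) ≤ (1 - Dh f z) * (1 + p) := by
    nlinarith [mul_nonneg (by linarith : (0:ℝ) ≤ 1 - Dh f z) (by nlinarith : (0:ℝ) ≤ p - p * X)]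
  rw [div_pow, div_mul_eq_mul_div, div_le_iff₀ (by positivity)]
  nlinarith [mul_le_mul_of_nonneg_left h1 (by linarith : (0:ℝ) ≤ 1 - p),
    mul_le_mul_of_nonneg_left h2 (by linarith : (0:ℝ) ≤ 1 + p)]

end HypDiffQuot

-- `cayley r = exp (-d(0, r))` for the hyperbolic distance `d` of density `2 / (1 - r ^ 2)`.
noncomputable def cayley (r : ℝ) : ℝ := (1 - r) / (1 + r)

noncomputable def hypTranslate (b x : ℝ) : ℝ := (x + b) / (1 + b * x)

section RealAxis

variable {a b r : ℝ}

theorem cayley_pos (hr : r ∈ Ioo (-1) 1) : 0 < cayley r :=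
  div_pos (by linarith [hr.2]) (by linarith [hr.1])

theorem cayley_hypTranslate (ha : a ∈ Ioo (-1) 1) (hb : b ∈ Ioo (-1) 1) :
    cayley (hypTranslate b a) = cayley a * cayley b := by
  obtain ⟨ha0, ha1⟩ := ha
  obtain ⟨hb0, hb1⟩ := hb
  have hne : 1 + b * a ≠ 0 := by nlinarith
  have h1 : 1 - hypTranslate b a = (1 - a) * (1 - b) / (1 + b * a) := by
    rw [hypTranslate, eq_div_iff hne, sub_mul, div_mul_cancel₀ _ hne]; ring
  have h2 : 1 + hypTranslate b a = (1 + a) * (1 + b) / (1 + b * a) := by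
    rw [hypTranslate, eq_div_iff hne, add_mul, div_mul_cancel₀ _ hne]; ring
  rw [cayley, h1, h2, div_div_div_cancel_right₀ hne, cayley, cayley, div_mul_div_comm]

theorem le_hypTranslate (ha : a ∈ Ioo (-1) 1) (hb0 : 0 ≤ b) (hb1 : b < 1) :
    a ≤ hypTranslate b a := by
  obtain ⟨ha0, ha1⟩ := ha
  rw [hypTranslate, le_div_iff₀ (by nlinarith)]
  nlinarith [mul_nonneg hb0 (by nlinarith : (0:ℝ) ≤ 1 - a ^ 2)]

theorem hypTranslate_mem_Ioo (ha : a ∈ Ioo (-1) 1) (hb : b ∈ Ioo (-1) 1) :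
    hypTranslate b a ∈ Ioo (-1) 1 := by
  obtain ⟨ha0, ha1⟩ := ha
  obtain ⟨hb0, hb1⟩ := hb
  have hpos : 0 < 1 + b * a := by nlinarith
  rw [hypTranslate, mem_Ioo, lt_div_iff₀ hpos, div_lt_one hpos]
  constructor <;> nlinarith

theorem cayley_lt_cayley_iff {x y : ℝ} (hx : -1 < x) (hy : -1 < y) :
    cayley x < cayley y ↔ y < x := by
  rw [cayley, cayley, div_lt_div_iff₀ (by linarith) (by linarith)]
  constructor <;> intro h <;> nlinarith

theorem norm_ofReal_lt_one (hr : r ∈ Ioo (-1) 1) : ‖(r : ℂ)‖ < 1 := by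
  rw [norm_real, Real.norm_eq_abs, abs_lt]
  exact hr

theorem one_sub_div_one_add_norm_mobius_ofReal (ha : -1 < a) (har : a ≤ r) (hr : r < 1) :
    (1 - ‖mobius a r‖) / (1 + ‖mobius a r‖) = cayley r / cayley a := by
  have h : 0 < 1 - a * r := by nlinarith
  have hm : mobius a r = (((a - r) / (1 - a * r) : ℝ) : ℂ) := by
    rw [mobius, conj_ofReal]; push_cast; ring
  have h1 : 1 - (r - a) / (1 - a * r) = (1 + a) * (1 - r) / (1 - a * r) := by
    rw [eq_div_iff h.ne', sub_mul, div_mul_cancel₀ _ h.ne']; ring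
  have h2 : 1 + (r - a) / (1 - a * r) = (1 - a) * (1 + r) / (1 - a * r) := by
    rw [eq_div_iff h.ne', add_mul, div_mul_cancel₀ _ h.ne']; ring
  have : 1 + r ≠ 0 := by linarith
  have : 1 + a ≠ 0 := by linarith
  rw [hm, norm_real, Real.norm_eq_abs, abs_div, abs_of_nonpos (by linarith), abs_of_pos h,
    neg_sub, h1, h2, div_div_div_cancel_right₀ h.ne', cayley, cayley]
  field_simp

theorem harnack_one_sub_Dh_ofReal {f : ℂ → ℂ} (hd : DifferentiableOn ℂ f (ball 0 1))
    (hm : MapsTo f (ball 0 1) (ball 0 1)) (ha : -1 < a) (har : a ≤ r) (hr : r < 1) :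
    (cayley r / cayley a) ^ 2 * (1 - Dh f a) ≤ 1 - Dh f r ∧
      (cayley r / cayley a) ^ 2 * (1 - Dh f r) ≤ 1 - Dh f a := by
  have ha' := norm_ofReal_lt_one ⟨ha, har.trans_lt hr⟩
  have hr' := norm_ofReal_lt_one ⟨ha.trans_le har, hr⟩
  rw [← one_sub_div_one_add_norm_mobius_ofReal ha har hr]
  refine ⟨harnack_one_sub_Dh hd hm ha' hr', ?_⟩
  rw [norm_mobius_comm]
  exact harnack_one_sub_Dh hd hm hr' ha'

theorem Icc_hypTranslate_subset_Ioo (ha : a ∈ Ioo (-1) 1) (hb : b ∈ Ioo (-1) 1) :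
    Icc a (hypTranslate b a) ⊆ Ioo (-1) 1 := fun _r hr =>
  ⟨ha.1.trans_le hr.1, hr.2.trans_lt (hypTranslate_mem_Ioo ha hb).2⟩

theorem two_div_one_sub_sq_pos (hr : r ∈ Ioo (-1) 1) : 0 < 2 / (1 - r ^ 2) :=
  div_pos two_pos (by nlinarith [hr.1, hr.2])

theorem hasDerivAt_cayley_sq (hr : r ∈ Ioo (-1) 1) :
    HasDerivAt (fun r => cayley r ^ 2) (-(2 * (2 / (1 - r ^ 2)) * cayley r ^ 2)) r := by
  obtain ⟨hr0, hr1⟩ := hr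
  have h1 : 1 + r ≠ 0 := by linarith
  have h2 : 1 - r ≠ 0 := by linarith
  have h3 : 1 - r ^ 2 ≠ 0 := by nlinarith
  have := (((hasDerivAt_id r).const_sub 1).div ((hasDerivAt_id r).const_add 1) h1).pow 2
  refine this.congr_deriv ?_
  simp only [id, cayley, Pi.div_apply]
  norm_num
  field_simp
  ring

theorem hasDerivAt_inv_cayley_sq (hr : r ∈ Ioo (-1) 1) :
    HasDerivAt (fun r => (cayley r ^ 2)⁻¹) (2 * (2 / (1 - r ^ 2)) * (cayley r ^ 2)⁻¹) r := by
  have hc := (cayley_pos hr).ne'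
  refine ((hasDerivAt_cayley_sq hr).inv (pow_ne_zero 2 hc)).congr_deriv ?_
  field_simp

end RealAxis

theorem lintegral_Ioc_ofReal_deriv {F F' : ℝ → ℝ} {a b : ℝ} (hab : a ≤ b)
    (hderiv : ∀ x ∈ Icc a b, HasDerivAt F (F' x) x) (hnn : ∀ x ∈ Ioo a b, 0 ≤ F' x) :
    ∫⁻ x in Ioc a b, ENNReal.ofReal (F' x) = ENNReal.ofReal (F b - F a) := by
  have hcont : ContinuousOn F (Icc a b) := HasDerivAt.continuousOn hderiv
  have hderiv' : ∀ x ∈ Ioo a b, HasDerivAt F (F' x) x := fun x hx =>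
    hderiv x (Ioo_subset_Icc_self hx)
  have hint := intervalIntegral.integrableOn_deriv_of_nonneg hcont hderiv' hnn
  have hnn' : 0 ≤ᵐ[volume.restrict (Ioc a b)] F' :=
    (ae_restrict_congr_set Ioo_ae_eq_Ioc).1
      ((ae_restrict_iff' measurableSet_Ioo).2 (ae_of_all _ hnn))
  rw [← intervalIntegral.integral_eq_sub_of_hasDerivAt_of_le hab hcont hderiv'
      ((intervalIntegrable_iff_integrableOn_Ioc_of_le hab).2 hint),
    intervalIntegral.integral_of_le hab, ofReal_integral_eq_lintegral_ofReal hint hnn']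

section Piece

variable {h : ℝ → ℝ} {a b : ℝ}

theorem ofReal_mul_le_lintegral_Ioc_hypTranslate (ha : a ∈ Ioo (-1) 1) (hb0 : 0 ≤ b)
    (hb1 : b < 1) (hha : 0 ≤ h a)
    (hh : ∀ r ∈ Ioc a (hypTranslate b a), (cayley r / cayley a) ^ 2 * h a ≤ h r) :
    ENNReal.ofReal (2 * b / (1 + b) ^ 2) * ENNReal.ofReal (h a)
      ≤ ∫⁻ r in Ioc a (hypTranslate b a), ENNReal.ofReal (h r * (2 / (1 - r ^ 2))) := by
  have hb : b ∈ Ioo (-1) 1 := ⟨by linarith, hb1⟩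
  have haa' := le_hypTranslate ha hb0 hb1
  have hmem := Icc_hypTranslate_subset_Ioo ha hb
  have hca := cayley_pos ha
  obtain ⟨c, hc, hc0⟩ : ∃ c, 2 * c * cayley a ^ 2 = h a ∧ 0 ≤ c :=
    ⟨h a / (2 * cayley a ^ 2), by field_simp, by positivity⟩
  have hderiv : ∀ r ∈ Icc a (hypTranslate b a), HasDerivAt (fun r => -c * cayley r ^ 2)
      (2 * c * (2 / (1 - r ^ 2)) * cayley r ^ 2) r := fun r hr =>
    ((hasDerivAt_cayley_sq (hmem hr)).const_mul (-c)).congr_deriv (by ring)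
  calc ENNReal.ofReal (2 * b / (1 + b) ^ 2) * ENNReal.ofReal (h a)
      = ENNReal.ofReal ((-c * cayley (hypTranslate b a) ^ 2) - (-c * cayley a ^ 2)) := by
        have hb' : 1 - cayley b ^ 2 = 2 * (2 * b / (1 + b) ^ 2) := by
          rw [cayley]; field_simp; ring
        rw [← ENNReal.ofReal_mul (by positivity), cayley_hypTranslate ha hb]
        congr 1
        linear_combination (-(c * cayley a ^ 2)) * hb' - (2 * b / (1 + b) ^ 2) * hc
    _ = ∫⁻ r in Ioc a (hypTranslate b a),
          ENNReal.ofReal (2 * c * (2 / (1 - r ^ 2)) * cayley r ^ 2) :=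
        (lintegral_Ioc_ofReal_deriv haa' hderiv fun r hr =>
          by have := two_div_one_sub_sq_pos (hmem (Ioo_subset_Icc_self hr)); positivity).symm
    _ ≤ ∫⁻ r in Ioc a (hypTranslate b a), ENNReal.ofReal (h r * (2 / (1 - r ^ 2))) := by
        refine setLIntegral_mono' measurableSet_Ioc fun r hr => ENNReal.ofReal_le_ofReal ?_
        have := two_div_one_sub_sq_pos (hmem (Ioc_subset_Icc_self hr))
        calc 2 * c * (2 / (1 - r ^ 2)) * cayley r ^ 2
            = (cayley r / cayley a) ^ 2 * h a * (2 / (1 - r ^ 2)) := by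
              rw [← hc]; field_simp
          _ ≤ h r * (2 / (1 - r ^ 2)) := by gcongr; exact hh r hr

theorem lintegral_Ioc_hypTranslate_le_ofReal_mul (ha : a ∈ Ioo (-1) 1) (hb0 : 0 ≤ b)
    (hb1 : b < 1) (hha : 0 ≤ h a)
    (hh : ∀ r ∈ Ioc a (hypTranslate b a), (cayley r / cayley a) ^ 2 * h r ≤ h a) :
    ∫⁻ r in Ioc a (hypTranslate b a), ENNReal.ofReal (h r * (2 / (1 - r ^ 2)))
      ≤ ENNReal.ofReal (2 * b / (1 - b) ^ 2) * ENNReal.ofReal (h a) := by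
  have hb : b ∈ Ioo (-1) 1 := ⟨by linarith, hb1⟩
  have haa' := le_hypTranslate ha hb0 hb1
  have hmem := Icc_hypTranslate_subset_Ioo ha hb
  have hca := cayley_pos ha
  obtain ⟨c, hc, hc0⟩ : ∃ c, 2 * c * (cayley a ^ 2)⁻¹ = h a ∧ 0 ≤ c :=
    ⟨h a * cayley a ^ 2 / 2, by field_simp, by positivity⟩
  have hderiv : ∀ r ∈ Icc a (hypTranslate b a), HasDerivAt (fun r => c * (cayley r ^ 2)⁻¹)
      (2 * c * (2 / (1 - r ^ 2)) * (cayley r ^ 2)⁻¹) r := fun r hr =>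
    ((hasDerivAt_inv_cayley_sq (hmem hr)).const_mul c).congr_deriv (by ring)
  calc ∫⁻ r in Ioc a (hypTranslate b a), ENNReal.ofReal (h r * (2 / (1 - r ^ 2)))
      ≤ ∫⁻ r in Ioc a (hypTranslate b a),
          ENNReal.ofReal (2 * c * (2 / (1 - r ^ 2)) * (cayley r ^ 2)⁻¹) := by
        refine setLIntegral_mono' measurableSet_Ioc fun r hr => ENNReal.ofReal_le_ofReal ?_
        have hcr := cayley_pos (hmem (Ioc_subset_Icc_self hr))
        have := hh r hr
        rw [div_pow, div_mul_eq_mul_div, div_le_iff₀ (pow_pos hca 2)] at this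
        calc h r * (2 / (1 - r ^ 2))
            = cayley r ^ 2 * h r * (cayley r ^ 2)⁻¹ * (2 / (1 - r ^ 2)) := by field_simp
          _ ≤ h a * cayley a ^ 2 * (cayley r ^ 2)⁻¹ * (2 / (1 - r ^ 2)) := by
              have := two_div_one_sub_sq_pos (hmem (Ioc_subset_Icc_self hr)); gcongr
          _ = 2 * c * (2 / (1 - r ^ 2)) * (cayley r ^ 2)⁻¹ := by rw [← hc]; field_simp
    _ = ENNReal.ofReal (c * (cayley (hypTranslate b a) ^ 2)⁻¹ - c * (cayley a ^ 2)⁻¹) :=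
        lintegral_Ioc_ofReal_deriv haa' hderiv fun r hr =>
          by have := two_div_one_sub_sq_pos (hmem (Ioo_subset_Icc_self hr)); positivity
    _ = ENNReal.ofReal (2 * b / (1 - b) ^ 2) * ENNReal.ofReal (h a) := by
        have hb' : (cayley b ^ 2)⁻¹ - 1 = 2 * (2 * b / (1 - b) ^ 2) := by
          have : 1 - b ≠ 0 := by linarith
          have : 1 + b ≠ 0 := by linarith
          rw [cayley]; field_simp; ring
        rw [← ENNReal.ofReal_mul (div_nonneg (by positivity) (sq_nonneg _)),
          cayley_hypTranslate ha hb]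
        congr 1
        linear_combination (c * (cayley a ^ 2)⁻¹) * hb' + (2 * b / (1 - b) ^ 2) * hc

end Piece

theorem lintegral_Ioc_hypTranslate_bounds {f : ℂ → ℂ} (hd : DifferentiableOn ℂ f (ball 0 1))
    (hm : MapsTo f (ball 0 1) (ball 0 1)) {a b : ℝ} (ha : a ∈ Ioo (-1) 1) (hb0 : 0 ≤ b)
    (hb1 : b < 1) :
    ENNReal.ofReal (2 * b / (1 + b) ^ 2) * ENNReal.ofReal (1 - Dh f a)
        ≤ ∫⁻ r in Ioc a (hypTranslate b a), ENNReal.ofReal ((1 - Dh f r) * (2 / (1 - r ^ 2)))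
      ∧ ∫⁻ r in Ioc a (hypTranslate b a), ENNReal.ofReal ((1 - Dh f r) * (2 / (1 - r ^ 2)))
        ≤ ENNReal.ofReal (2 * b / (1 - b) ^ 2) * ENNReal.ofReal (1 - Dh f a) := by
  have hha : 0 ≤ 1 - Dh f a := sub_nonneg.2 (Dh_le_one hd hm (norm_ofReal_lt_one ha))
  have hr : ∀ r ∈ Ioc a (hypTranslate b a), r < 1 := fun r hr =>
    hr.2.trans_lt (hypTranslate_mem_Ioo ha ⟨by linarith, hb1⟩).2
  exact ⟨ofReal_mul_le_lintegral_Ioc_hypTranslate (h := fun r => 1 - Dh f r) ha hb0 hb1 hha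
      fun r hr' => (harnack_one_sub_Dh_ofReal hd hm ha.1 hr'.1.le (hr r hr')).1,
    lintegral_Ioc_hypTranslate_le_ofReal_mul (h := fun r => 1 - Dh f r) ha hb0 hb1 hha
      fun r hr' => (harnack_one_sub_Dh_ofReal hd hm ha.1 hr'.1.le (hr r hr')).2⟩

theorem iUnion_Ioc_eq_Ioo_of_monotone {α : Type*} [LinearOrder α] {f : ℕ → α} {L : α}
    (hf : Monotone f) (hlt : ∀ n, f n < L) (hcof : ∀ x ∈ Ioo (f 0) L, ∃ n, x ≤ f n) :
    ⋃ n, Ioc (f n) (f (n + 1)) = Ioo (f 0) L := by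
  ext x
  simp only [mem_iUnion, mem_Ioc, mem_Ioo]
  constructor
  · rintro ⟨n, h0, h1⟩
    exact ⟨(hf (Nat.zero_le n)).trans_lt h0, h1.trans_lt (hlt _)⟩
  · rintro ⟨h0, hL⟩
    classical
    have hex := hcof x ⟨h0, hL⟩
    obtain ⟨m, hm⟩ : ∃ m, Nat.find hex = m + 1 := Nat.exists_eq_succ_of_ne_zero fun h => by
      have := Nat.find_spec hex
      rw [h] at this
      exact h0.not_ge this
    refine ⟨m, not_le.1 (Nat.find_min hex (by omega)), ?_⟩
    rw [← hm]
    exact Nat.find_spec hex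

section Orbit

variable {b : ℝ}

theorem iterate_hypTranslate_mem_Ioo (hb : b ∈ Ioo (-1) 1) (n : ℕ) :
    (hypTranslate b)^[n] 0 ∈ Ioo (-1) 1 := by
  induction n with
  | zero => exact ⟨by norm_num, by norm_num⟩
  | succ n ih => rw [Function.iterate_succ_apply']; exact hypTranslate_mem_Ioo ih hb

theorem cayley_iterate_hypTranslate (hb : b ∈ Ioo (-1) 1) (n : ℕ) :
    cayley ((hypTranslate b)^[n] 0) = cayley b ^ n := by
  induction n with
  | zero => simp [cayley]
  | succ n ih =>
    rw [Function.iterate_succ_apply', cayley_hypTranslate (iterate_hypTranslate_mem_Ioo hb n) hb,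
      ih, pow_succ]

theorem monotone_iterate_hypTranslate (hb0 : 0 ≤ b) (hb1 : b < 1) :
    Monotone fun n => (hypTranslate b)^[n] 0 :=
  monotone_nat_of_le_succ fun n => by
    rw [Function.iterate_succ_apply']
    exact le_hypTranslate (iterate_hypTranslate_mem_Ioo ⟨by linarith, hb1⟩ n) hb0 hb1

theorem iUnion_Ioc_iterate_hypTranslate (hb0 : 0 < b) (hb1 : b < 1) :
    ⋃ n, Ioc ((hypTranslate b)^[n] 0) ((hypTranslate b)^[n + 1] 0) = Ioo 0 1 := by
  have hb : b ∈ Ioo (-1) 1 := ⟨by linarith, hb1⟩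
  refine iUnion_Ioc_eq_Ioo_of_monotone (monotone_iterate_hypTranslate hb0.le hb1)
    (fun n => (iterate_hypTranslate_mem_Ioo hb n).2) fun x hx => ?_
  rw [Function.iterate_zero_apply] at hx
  have hq : cayley b < 1 := (div_lt_one (by linarith)).2 (by linarith)
  obtain ⟨n, hn⟩ := exists_pow_lt_of_lt_one (cayley_pos ⟨by linarith [hx.1], hx.2⟩) hq
  refine ⟨n, le_of_lt ((cayley_lt_cayley_iff (iterate_hypTranslate_mem_Ioo hb n).1 ?_).1 ?_)⟩
  · linarith [hx.1]
  · rwa [cayley_iterate_hypTranslate hb]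

theorem lintegral_Ioo_eq_tsum_lintegral_Ioc_hypTranslate (hb0 : 0 < b) (hb1 : b < 1)
    (g : ℝ → ℝ≥0∞) :
    ∫⁻ r in Ioo 0 1, g r
      = ∑' n, ∫⁻ r in Ioc ((hypTranslate b)^[n] 0) (hypTranslate b ((hypTranslate b)^[n] 0)),
          g r := by
  have hdisj : Pairwise (Function.onFun Disjoint
      fun n => Ioc ((hypTranslate b)^[n] 0) ((hypTranslate b)^[n + 1] 0)) :=
    (monotone_iterate_hypTranslate hb0.le hb1).pairwise_disjoint_on_Ioc_succ
  rw [← iUnion_Ioc_iterate_hypTranslate hb0 hb1,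
    lintegral_iUnion (fun n => measurableSet_Ioc) hdisj]
  simp only [Function.iterate_succ_apply']

end Orbit

theorem integral_vs_sum_along_orbit (φ : ℂ → ℂ)
    (hφ : DifferentiableOn ℂ φ (ball (0:ℂ) 1))
    (hmap : MapsTo φ (ball (0:ℂ) 1) (ball (0:ℂ) 1))
    (b : ℝ) (hb0 : 0 < b) (hb1 : b < 1)
    (ψ : ℂ → ℂ) (hψ : ∀ z : ℂ, ψ z = (z + (b : ℂ)) / (1 + (b : ℂ) * z)) :
    ENNReal.ofReal (2 * b / (1 + b) ^ 2) *
        (∑' n : ℕ, ENNReal.ofReal (1 - Dh φ (ψ^[n] 0)))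
      ≤ ∫⁻ r in Ioo (0:ℝ) 1,
          ENNReal.ofReal ((1 - Dh φ (r : ℂ)) * (2 / (1 - r ^ 2)))
    ∧ (∫⁻ r in Ioo (0:ℝ) 1,
          ENNReal.ofReal ((1 - Dh φ (r : ℂ)) * (2 / (1 - r ^ 2))))
      ≤ ENNReal.ofReal (2 * b / (1 - b) ^ 2) *
          (∑' n : ℕ, ENNReal.ofReal (1 - Dh φ (ψ^[n] 0))) := by
  have hconj : Function.Semiconj ((↑) : ℝ → ℂ) (hypTranslate b) ψ := fun r => by
    rw [hψ, hypTranslate]; push_cast; ring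
  have horbit : ∀ n, ψ^[n] 0 = ((hypTranslate b)^[n] 0 : ℝ) := fun n => by
    simpa using (hconj.iterate_right n 0).symm
  have hbounds := fun n => lintegral_Ioc_hypTranslate_bounds hφ hmap
    (iterate_hypTranslate_mem_Ioo ⟨by linarith, hb1⟩ n) hb0.le hb1
  simp only [lintegral_Ioo_eq_tsum_lintegral_Ioc_hypTranslate hb0 hb1, horbit,
    ← ENNReal.tsum_mul_left]
  exact ⟨ENNReal.tsum_le_tsum fun n => (hbounds n).1, ENNReal.tsum_le_tsum fun n => (hbounds n).2⟩
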